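/- arXiv:2603.10750 — 2 statements merged into one kernel-verified Lean document; each statement's English description precedes it below -/
import Mathlib

section
/- Cardinality bound for the auxiliary variable in the strong coordination rate region: Let 𝒳 and 𝒴 be finite alphabets and Q_{XY} a joint pmf on 𝒳×𝒴. For every finite set 𝒰 and every joint pmf P_{UXY} on 𝒰×𝒳×𝒴 whose (X,Y)-marginal equals Q_{XY} and which satisfies the Markov chain X−U−Y, there exist a finite set 𝒰' with |𝒰'| ≤ |𝒳|·|𝒴| + 2 and a joint pmf P_{U'XY} on 𝒰'×𝒳×𝒴 whose (X,Y)-marginal equals Q_{XY}, satisfying the Markov chain X−U'−Y, such that I(X;U') ≤ I(X;U), I(X,Y;U') ≤ I(X,Y;U), and H(Y|U') ≤ H(Y|U). -/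
open scoped BigOperators

/-- A probability mass function on a finite set: nonnegative, summing to one. -/
def IsPMF {α : Type*} [Fintype α] (p : α → ℝ) : Prop :=
  (∀ a, 0 ≤ p a) ∧ ∑ a, p a = 1

/-- Shannon entropy `H(p) = -∑ p(a) log p(a)` (with `0 log 0 = 0`, since `Real.log 0 = 0`). -/
noncomputable def entropy {α : Type*} [Fintype α] (p : α → ℝ) : ℝ :=
  -∑ a, p a * Real.log (p a)

/-- Mutual information `I(A;B)` of a joint pmf on `α × β`. -/
noncomputable def mutualInfo {α β : Type*} [Fintype α] [Fintype β] (p : α × β → ℝ) : ℝ :=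
  ∑ a, ∑ b, p (a, b) * Real.log (p (a, b) / ((∑ b', p (a, b')) * (∑ a', p (a', b))))

/-- The Markov chain `X − U − Y`: `p(x,u,y)·p(u) = p(x,u)·p(u,y)` for all `(x,u,y)`. -/
def IsMarkov {X U Y : Type*} [Fintype X] [Fintype U] [Fintype Y] (p : X × U × Y → ℝ) : Prop :=
  ∀ x u y, p (x, u, y) * (∑ x', ∑ y', p (x', u, y')) =
    (∑ y', p (x, u, y')) * (∑ x', p (x', u, y))

/-- `I(X;U)` computed from the `(X,U)`-marginal of a joint pmf on `X × U × Y`. -/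
noncomputable def IXU {X U Y : Type*} [Fintype X] [Fintype U] [Fintype Y]
    (p : X × U × Y → ℝ) : ℝ :=
  mutualInfo (fun q : X × U => ∑ y, p (q.1, q.2, y))

/-- `I(X,Y;U)` computed from the `((X,Y),U)`-marginal of a joint pmf on `X × U × Y`. -/
noncomputable def IXYU {X U Y : Type*} [Fintype X] [Fintype U] [Fintype Y]
    (p : X × U × Y → ℝ) : ℝ :=
  mutualInfo (fun q : (X × Y) × U => p (q.1.1, q.2, q.1.2))

/-- Conditional entropy `H(Y|U) = H(U,Y) − H(U)` of a joint pmf on `X × U × Y`. -/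
noncomputable def HYgU {X U Y : Type*} [Fintype X] [Fintype U] [Fintype Y]
    (p : X × U × Y → ℝ) : ℝ :=
  entropy (fun q : U × Y => ∑ x, p (x, q.1, q.2)) -
    entropy (fun u : U => ∑ x, ∑ y, p (x, u, y))


/-!
Under the Markov chain `X − U − Y` the joint pmf is a mixture `w(u) a_u(x) b_u(y)` of product pmfs,
and `I(X;U)`, `I(X,Y;U)`, `H(Y|U)` are functions of the average over `u` of the points
`(a_u ⊗ b_u, H(a_u), H(b_u))` of `ℝ^(𝒳×𝒴) × ℝ × ℝ`. All these points have total mass one in the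
first coordinate, so they lie in an affine hyperplane of this `(|𝒳||𝒴| + 2)`-dimensional space, and
Carathéodory's theorem writes the average as a convex combination of at most `|𝒳||𝒴| + 2` of them.
That combination is a new mixture with the same `(X,Y)`-marginal and the same three quantities.
-/

open Finset

section Entropy

variable {α β I : Type*} [Fintype α] [Fintype β] [Fintype I]

lemma IsPMF.nonempty {p : α → ℝ} (hp : IsPMF p) : Nonempty α := by
  by_contra h
  rw [not_nonempty_iff] at h
  simpa using hp.2

lemma entropy_comp_equiv (e : β ≃ α) (p : α → ℝ) : entropy (p ∘ e) = entropy p := by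
  simp only [entropy, Function.comp_apply, Equiv.sum_comp e (fun a => p a * Real.log (p a))]

lemma mul_log_mul_eq (a b : ℝ) (ha : 0 ≤ a) (hb : 0 ≤ b) :
    a * b * Real.log (a * b) = b * (a * Real.log a) + a * (b * Real.log b) := by
  rcases ha.eq_or_lt with rfl | ha
  · simp
  rcases hb.eq_or_lt with rfl | hb
  · simp
  rw [Real.log_mul ha.ne' hb.ne']
  ring

lemma entropy_mul_eq_entropy_add_sum {w : I → ℝ} {k : I → α → ℝ} (hw : ∀ i, 0 ≤ w i)
    (hk : ∀ i, IsPMF (k i)) :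
    entropy (fun q : I × α => w q.1 * k q.1 q.2) = entropy w + ∑ i, w i * entropy (k i) := by
  have hterm (i : I) :
      ∑ a, w i * k i a * Real.log (w i * k i a) =
        w i * Real.log (w i) + w i * ∑ a, k i a * Real.log (k i a) := by
    simp only [fun a => mul_log_mul_eq _ _ (hw i) ((hk i).1 a), sum_add_distrib,
      ← sum_mul, ← mul_sum, (hk i).2, one_mul]
  simp only [entropy, Fintype.sum_prod_type, hterm, sum_add_distrib, mul_neg, sum_neg_distrib]
  ring

lemma entropy_mul_of_isPMF {p : α → ℝ} {r : β → ℝ} (hp : IsPMF p) (hr : IsPMF r) :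
    entropy (fun q : α × β => p q.1 * r q.2) = entropy p + entropy r := by
  rw [entropy_mul_eq_entropy_add_sum hp.1 fun _ => hr, ← sum_mul, hp.2, one_mul]

lemma mutualInfo_eq_entropy_add_entropy_sub_entropy {p : α × β → ℝ} (hp : ∀ q, 0 ≤ p q) :
    mutualInfo p = entropy (fun a => ∑ b, p (a, b)) + entropy (fun b => ∑ a, p (a, b)) -
      entropy p := by
  have hterm (a : α) (b : β) :
      p (a, b) * Real.log (p (a, b) / ((∑ b', p (a, b')) * ∑ a', p (a', b))) =
        p (a, b) * Real.log (p (a, b)) - p (a, b) * Real.log (∑ b', p (a, b')) -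
          p (a, b) * Real.log (∑ a', p (a', b)) := by
    rcases (hp (a, b)).eq_or_lt with h | h
    · simp [← h]
    have hA : 0 < ∑ b', p (a, b') :=
      h.trans_le (single_le_sum (f := fun b' => p (a, b')) (fun _ _ => hp _) (mem_univ b))
    have hB : 0 < ∑ a', p (a', b) :=
      h.trans_le (single_le_sum (f := fun a' => p (a', b)) (fun _ _ => hp _) (mem_univ a))
    rw [Real.log_div h.ne' (mul_pos hA hB).ne', Real.log_mul hA.ne' hB.ne']
    ring
  simp only [mutualInfo, entropy, hterm, sum_sub_distrib, Fintype.sum_prod_type, ← sum_mul]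
  rw [sum_comm (f := fun a b => p (a, b) * Real.log (∑ a', p (a', b)))]
  simp only [← sum_mul]
  ring

lemma mutualInfo_mul_eq {w : I → ℝ} {k : I → α → ℝ} (hw : ∀ i, 0 ≤ w i)
    (hk : ∀ i, IsPMF (k i)) :
    mutualInfo (fun q : α × I => w q.2 * k q.2 q.1) =
      entropy (fun a => ∑ i, w i * k i a) - ∑ i, w i * entropy (k i) := by
  have hswap : entropy (fun q : α × I => w q.2 * k q.2 q.1) =
      entropy (fun q : I × α => w q.1 * k q.1 q.2) :=
    entropy_comp_equiv (Equiv.prodComm α I) fun q : I × α => w q.1 * k q.1 q.2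
  rw [mutualInfo_eq_entropy_add_entropy_sub_entropy
      fun q => mul_nonneg (hw _) ((hk _).1 _), hswap, entropy_mul_eq_entropy_add_sum hw hk]
  simp only [← mul_sum, (hk _).2, mul_one]
  ring

end Entropy

section Mixture

variable {X Y I : Type*} [Fintype X] [Fintype Y] [Fintype I]

lemma sum_prod_prod_eq_sum_sum_sum (f : X × I × Y → ℝ) :
    ∑ q, f q = ∑ i, ∑ x, ∑ y, f (x, i, y) := by
  simp only [Fintype.sum_prod_type]
  exact sum_comm

def mixture (w : I → ℝ) (a : I → X → ℝ) (b : I → Y → ℝ) : X × I × Y → ℝ :=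
  fun q => w q.2.1 * (a q.2.1 q.1 * b q.2.1 q.2.2)

noncomputable def productPoint (a : X → ℝ) (b : Y → ℝ) : (X × Y → ℝ) × ℝ × ℝ :=
  (fun q => a q.1 * b q.2, entropy a, entropy b)

noncomputable def mixtureMoment (w : I → ℝ) (a : I → X → ℝ) (b : I → Y → ℝ) :
    (X × Y → ℝ) × ℝ × ℝ :=
  (fun q => ∑ i, w i * (a i q.1 * b i q.2), ∑ i, w i * entropy (a i), ∑ i, w i * entropy (b i))

variable {w : I → ℝ} {a : I → X → ℝ} {b : I → Y → ℝ}

lemma mixtureMoment_eq_sum_smul :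
    mixtureMoment w a b = ∑ i, w i • productPoint (a i) (b i) := by
  ext <;> simp [mixtureMoment, productPoint, Prod.fst_sum, Prod.snd_sum]

lemma sum_productPoint_fst {a : X → ℝ} {b : Y → ℝ} (ha : ∑ x, a x = 1) (hb : ∑ y, b y = 1) :
    ∑ q, (productPoint a b).1 q = 1 := by
  simp only [productPoint, Fintype.sum_prod_type, ← Fintype.sum_mul_sum, ha, hb, one_mul]

lemma sum_mixture_eq_mixtureMoment_fst (x : X) (y : Y) :
    ∑ i, mixture w a b (x, i, y) = (mixtureMoment w a b).1 (x, y) :=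
  rfl

omit [Fintype X] [Fintype I] in
lemma sum_mixture_right (hb : ∀ i, ∑ y, b i y = 1) (x : X) (i : I) :
    ∑ y, mixture w a b (x, i, y) = w i * a i x := by
  simp only [mixture, ← mul_sum, hb, mul_one]

omit [Fintype Y] [Fintype I] in
lemma sum_mixture_left (ha : ∀ i, ∑ x, a i x = 1) (i : I) (y : Y) :
    ∑ x, mixture w a b (x, i, y) = w i * b i y := by
  simp only [mixture, mul_comm (a i _), ← mul_sum, ha, mul_one]

omit [Fintype I] in
lemma sum_sum_mixture (ha : ∀ i, ∑ x, a i x = 1) (hb : ∀ i, ∑ y, b i y = 1) (i : I) :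
    ∑ x, ∑ y, mixture w a b (x, i, y) = w i := by
  simp only [sum_mixture_right hb, ← mul_sum, ha, mul_one]

lemma sum_mixtureMoment_fst (hb : ∀ i, ∑ y, b i y = 1) (x : X) :
    ∑ y, (mixtureMoment w a b).1 (x, y) = ∑ i, w i * a i x := by
  simp only [← sum_mixture_eq_mixtureMoment_fst, ← sum_mixture_right hb]
  exact sum_comm

lemma isPMF_mixture (hw : IsPMF w) (ha : ∀ i, IsPMF (a i)) (hb : ∀ i, IsPMF (b i)) :
    IsPMF (mixture w a b) := by
  refine ⟨fun q => mul_nonneg (hw.1 _) (mul_nonneg ((ha _).1 _) ((hb _).1 _)), ?_⟩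
  rw [sum_prod_prod_eq_sum_sum_sum]
  simp only [sum_sum_mixture (fun i => (ha i).2) (fun i => (hb i).2), hw.2]

lemma isMarkov_mixture (ha : ∀ i, ∑ x, a i x = 1) (hb : ∀ i, ∑ y, b i y = 1) :
    IsMarkov (mixture w a b) := by
  intro x i y
  rw [sum_sum_mixture ha hb, sum_mixture_right hb, sum_mixture_left ha, mixture]
  ring

variable (hw : ∀ i, 0 ≤ w i) (ha : ∀ i, IsPMF (a i)) (hb : ∀ i, IsPMF (b i))
include hw ha hb

lemma IXU_mixture :
    IXU (mixture w a b) =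
      entropy (fun x => ∑ y, (mixtureMoment w a b).1 (x, y)) - (mixtureMoment w a b).2.1 := by
  simp only [IXU, sum_mixture_right fun i => (hb i).2, sum_mixtureMoment_fst fun i => (hb i).2]
  exact mutualInfo_mul_eq hw ha

lemma IXYU_mixture :
    IXYU (mixture w a b) =
      entropy (mixtureMoment w a b).1 -
        ((mixtureMoment w a b).2.1 + (mixtureMoment w a b).2.2) := by
  have := mutualInfo_mul_eq (k := fun i (q : X × Y) => a i q.1 * b i q.2) hw
    fun i => ⟨fun q => mul_nonneg ((ha i).1 _) ((hb i).1 _),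
      sum_productPoint_fst (ha i).2 (hb i).2⟩
  simp only [entropy_mul_of_isPMF (ha _) (hb _), mul_add, sum_add_distrib] at this
  exact this

lemma HYgU_mixture : HYgU (mixture w a b) = (mixtureMoment w a b).2.2 := by
  simp only [HYgU, sum_mixture_left fun i => (ha i).2,
    sum_sum_mixture (fun i => (ha i).2) fun i => (hb i).2]
  rw [entropy_mul_eq_entropy_add_sum hw hb, add_sub_cancel_left]
  rfl

end Mixture

lemma exists_isPMF_mul_eq {α : Type*} [Fintype α] [Nonempty α] {f : α → ℝ}
    (hf : ∀ a, 0 ≤ f a) : ∃ g, IsPMF g ∧ ∀ a, f a = (∑ a', f a') * g a := by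
  by_cases h : ∑ a', f a' = 0
  · have hf0 := (sum_eq_zero_iff_of_nonneg fun a _ => hf a).mp h
    refine ⟨fun _ => (Fintype.card α : ℝ)⁻¹, ⟨fun _ => by positivity, ?_⟩, fun a => ?_⟩
    · simp
    · simp [hf0 a (mem_univ a), h]
  · refine ⟨fun a => f a / ∑ a', f a',
      ⟨fun a => div_nonneg (hf a) (sum_nonneg fun a _ => hf a), ?_⟩, fun a => ?_⟩
    · rw [← sum_div, div_self h]
    · rw [mul_div_cancel₀ _ h]

lemma IsMarkov.exists_eq_mixture {X U Y : Type*} [Fintype X] [Fintype U] [Fintype Y]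
    {P : X × U × Y → ℝ} (hP : IsPMF P) (hmc : IsMarkov P) :
    ∃ (w : U → ℝ) (a : U → X → ℝ) (b : U → Y → ℝ),
      IsPMF w ∧ (∀ u, IsPMF (a u)) ∧ (∀ u, IsPMF (b u)) ∧ P = mixture w a b := by
  have : Nonempty X := hP.nonempty.map Prod.fst
  have : Nonempty Y := hP.nonempty.map fun q => q.2.2
  set w : U → ℝ := fun u => ∑ x, ∑ y, P (x, u, y)
  have hw : ∀ u, 0 ≤ w u := fun u => sum_nonneg fun x _ => sum_nonneg fun y _ => hP.1 _
  choose a ha hwa using fun u => exists_isPMF_mul_eq fun x =>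
    sum_nonneg fun y (_ : y ∈ univ) => hP.1 (x, u, y)
  choose b hb hwb using fun u => exists_isPMF_mul_eq fun y =>
    sum_nonneg fun x (_ : x ∈ univ) => hP.1 (x, u, y)
  refine ⟨w, a, b, ⟨hw, by rw [← hP.2, sum_prod_prod_eq_sum_sum_sum]⟩, ha, hb, ?_⟩
  ext ⟨x, u, y⟩
  have hmarkov := hmc x u y
  rw [hwa u x, hwb u y, sum_comm (f := fun y x => P (x, u, y))] at hmarkov
  rcases (hw u).eq_or_lt with hw0 | hwpos
  · have hle : P (x, u, y) ≤ w u :=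
      (single_le_sum (f := fun y' => P (x, u, y')) (fun _ _ => hP.1 _) (mem_univ y)).trans
        (single_le_sum (f := fun x' => ∑ y', P (x', u, y'))
          (fun _ _ => sum_nonneg fun _ _ => hP.1 _) (mem_univ x))
    simp only [mixture, ← hw0, zero_mul]
    exact le_antisymm (hw0 ▸ hle) (hP.1 _)
  · simp only [mixture]
    apply mul_right_cancel₀ hwpos.ne'
    linear_combination hmarkov

theorem exists_convexCombination_card_le_finrank {𝕜 V T : Type*} [Field 𝕜] [LinearOrder 𝕜]
    [IsStrictOrderedRing 𝕜] [AddCommGroup V] [Module 𝕜 V] [FiniteDimensional 𝕜 V]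
    (L : Module.Dual 𝕜 V) (φ : T → V) (hφ : ∀ t, L (φ t) = 1) {v : V}
    (hv : v ∈ convexHull 𝕜 (Set.range φ)) :
    ∃ m ≤ Module.finrank 𝕜 V, ∃ (c : Fin m → 𝕜) (t : Fin m → T),
      (∀ i, 0 ≤ c i) ∧ ∑ i, c i = 1 ∧ ∑ i, c i • φ (t i) = v := by
  obtain ⟨_, t₀, -⟩ := convexHull_nonempty_iff.mp ⟨v, hv⟩
  have hL : L ≠ 0 := fun h => by simpa [h] using hφ t₀
  obtain ⟨ι, _, z, c, hz, hind, hc, hc1, hcz⟩ := eq_pos_convex_span_of_mem_convexHull hv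
  choose t ht using fun i => hz (Set.mem_range_self i)
  have hspan : vectorSpan 𝕜 (Set.range z) ≤ LinearMap.ker L := by
    rw [vectorSpan_def, Submodule.span_le]
    rintro _ ⟨_, ⟨i, rfl⟩, _, ⟨j, rfl⟩, rfl⟩
    simp [← ht, hφ]
  have hcard : Fintype.card ι ≤ Module.finrank 𝕜 V :=
    calc Fintype.card ι ≤ Module.finrank 𝕜 (vectorSpan 𝕜 (Set.range z)) + 1 :=
          hind.card_le_finrank_succ
      _ ≤ Module.finrank 𝕜 (LinearMap.ker L) + 1 := by gcongr; exact Submodule.finrank_mono hspan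
      _ = Module.finrank 𝕜 V := Module.Dual.finrank_ker_add_one_of_ne_zero hL
  let e := (Fintype.equivFin ι).symm
  refine ⟨Fintype.card ι, hcard, c ∘ e, t ∘ e, fun i => (hc _).le, ?_, ?_⟩
  · rw [Function.comp_def, Equiv.sum_comp e c, hc1]
  · simp only [Function.comp_apply, ht, Equiv.sum_comp e fun i => c i • z i, hcz]

theorem strong_coordination_cardinality_bound_general
    {X Y U : Type*} [Fintype X] [Fintype Y] [Fintype U]
    (Q : X × Y → ℝ)
    (P : X × U × Y → ℝ) (hP : IsPMF P)
    (hmarg : ∀ x y, (∑ u, P (x, u, y)) = Q (x, y))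
    (hmc : IsMarkov P) :
    ∃ m : ℕ, m ≤ Fintype.card X * Fintype.card Y + 2 ∧
      ∃ P' : X × Fin m × Y → ℝ, IsPMF P' ∧
        (∀ x y, (∑ u, P' (x, u, y)) = Q (x, y)) ∧ IsMarkov P' ∧
        IXU P' ≤ IXU P ∧ IXYU P' ≤ IXYU P ∧ HYgU P' ≤ HYgU P := by
  obtain ⟨w, a, b, hw, ha, hb, rfl⟩ := hmc.exists_eq_mixture hP
  let φ (t : {ab : (X → ℝ) × (Y → ℝ) // IsPMF ab.1 ∧ IsPMF ab.2}) := productPoint t.1.1 t.1.2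
  let L : Module.Dual ℝ ((X × Y → ℝ) × ℝ × ℝ) :=
    ∑ q, (LinearMap.proj q).comp (LinearMap.fst ℝ (X × Y → ℝ) (ℝ × ℝ))
  have hφ (t) : L (φ t) = 1 := by
    simpa [L] using sum_productPoint_fst t.2.1.2 t.2.2.2
  have hv : mixtureMoment w a b ∈ convexHull ℝ (Set.range φ) := by
    rw [mixtureMoment_eq_sum_smul]
    exact (convex_convexHull ℝ _).sum_mem (fun i _ => hw.1 i) hw.2
      fun i _ => subset_convexHull ℝ _ ⟨⟨(a i, b i), ha i, hb i⟩, rfl⟩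
  obtain ⟨m, hm, c, t, hc, hc1, hct⟩ := exists_convexCombination_card_le_finrank L φ hφ hv
  have ha' (i) : IsPMF (t i).1.1 := (t i).2.1
  have hb' (i) : IsPMF (t i).1.2 := (t i).2.2
  have hmoment :
      mixtureMoment c (fun i => (t i).1.1) (fun i => (t i).1.2) = mixtureMoment w a b :=
    mixtureMoment_eq_sum_smul.trans hct
  refine ⟨m, by simpa [Module.finrank_prod] using hm, mixture c _ _,
    isPMF_mixture ⟨hc, hc1⟩ ha' hb', fun x y => ?_,
    isMarkov_mixture (fun i => (ha' i).2) (fun i => (hb' i).2), ?_, ?_, ?_⟩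
  · rw [← hmarg, sum_mixture_eq_mixtureMoment_fst, sum_mixture_eq_mixtureMoment_fst, hmoment]
  · rw [IXU_mixture hc ha' hb', IXU_mixture hw.1 ha hb, hmoment]
  · rw [IXYU_mixture hc ha' hb', IXYU_mixture hw.1 ha hb, hmoment]
  · rw [HYgU_mixture hc ha' hb', HYgU_mixture hw.1 ha hb, hmoment]

/-- **Cardinality bound for the auxiliary variable in the strong coordination rate region.**
For every finite `𝒰` and joint pmf `P_{UXY}` with `(X,Y)`-marginal `Q_{XY}` and Markov chain
`X − U − Y`, there is a finite set `𝒰'` (encoded as `Fin m`) with `|𝒰'| ≤ |𝒳|·|𝒴| + 2` and a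
joint pmf `P_{U'XY}` with the same `(X,Y)`-marginal and Markov chain such that
`I(X;U') ≤ I(X;U)`, `I(X,Y;U') ≤ I(X,Y;U)`, and `H(Y|U') ≤ H(Y|U)`. -/
theorem strong_coordination_cardinality_bound
    {X Y U : Type*} [Fintype X] [Fintype Y] [Fintype U]
    (Q : X × Y → ℝ) (hQ : IsPMF Q)
    (P : X × U × Y → ℝ) (hP : IsPMF P)
    (hmarg : ∀ x y, (∑ u, P (x, u, y)) = Q (x, y))
    (hmc : IsMarkov P) :
    ∃ m : ℕ, m ≤ Fintype.card X * Fintype.card Y + 2 ∧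
      ∃ P' : X × Fin m × Y → ℝ, IsPMF P' ∧
        (∀ x y, (∑ u, P' (x, u, y)) = Q (x, y)) ∧ IsMarkov P' ∧
        IXU P' ≤ IXU P ∧ IXYU P' ≤ IXYU P ∧ HYgU P' ≤ HYgU P :=
  strong_coordination_cardinality_bound_general Q P hP hmarg hmc
end

section
/- Unlimited-common-randomness corner of the rate region equals the mutual information: Let 𝒳 and 𝒴 be finite alphabets and Q_{XY} a joint pmf on 𝒳×𝒴. Define the rate region ℛ(Q_{XY}) as the set of triples (R, R₀, R_L) of nonnegative reals for which there exist a finite set 𝒰 and a joint pmf P_{UXY} whose (X,Y)-marginal equals Q_{XY}, satisfying the Markov chain X−U−Y, with R ≥ I(X;U), R₀ + R ≥ I(X,Y;U), and R_L ≥ H(Y|U). Then inf{ R : ∃ R₀ ≥ 0, ∃ R_L ≥ 0, (R, R₀, R_L) ∈ ℛ(Q_{XY}) } = I(X;Y), where I(X;Y) is the mutual information computed under Q_{XY}. -/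
open scoped BigOperators

/-- The strong coordination rate region `ℛ(Q_{XY})`: triples `(R, R₀, R_L)` of nonnegative
reals for which there exist a finite set `𝒰` (encoded as `Fin m`) and a joint pmf `P_{UXY}`
with `(X,Y)`-marginal `Q_{XY}`, satisfying the Markov chain `X − U − Y`, with `R ≥ I(X;U)`,
`R₀ + R ≥ I(X,Y;U)`, and `R_L ≥ H(Y|U)`. -/
def RateRegion {X Y : Type*} [Fintype X] [Fintype Y] (Q : X × Y → ℝ) : Set (ℝ × ℝ × ℝ) :=
  {t | 0 ≤ t.1 ∧ 0 ≤ t.2.1 ∧ 0 ≤ t.2.2 ∧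
    ∃ (m : ℕ) (P : X × Fin m × Y → ℝ), IsPMF P ∧
      (∀ x y, (∑ u, P (x, u, y)) = Q (x, y)) ∧ IsMarkov P ∧
      IXU P ≤ t.1 ∧ IXYU P ≤ t.2.1 + t.1 ∧ HYgU P ≤ t.2.2}


lemma log_sum_ineq {ι : Type*} [Fintype ι] (a b : ι → ℝ)
    (ha : ∀ i, 0 ≤ a i) (hb : ∀ i, 0 ≤ b i) (hab : ∀ i, 0 < a i → 0 < b i) :
    (∑ i, a i) * Real.log ((∑ i, a i) / (∑ i, b i)) ≤ ∑ i, a i * Real.log (a i / b i) := by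
  by_cases hA : (∑ i, a i) = 0
  · have h0 : ∀ i ∈ Finset.univ, a i = 0 :=
      (Finset.sum_eq_zero_iff_of_nonneg (fun i _ => ha i)).mp hA
    rw [hA, zero_mul]
    exact le_of_eq (Finset.sum_eq_zero (fun i hi => by rw [h0 i hi, zero_mul])).symm
  · have hApos : 0 < ∑ i, a i :=
      lt_of_le_of_ne (Finset.sum_nonneg fun i _ => ha i) (Ne.symm hA)
    obtain ⟨i0, hi0⟩ : ∃ i, 0 < a i := by
      by_contra h
      push_neg at h
      exact hA (le_antisymm (Finset.sum_nonpos fun i _ => h i)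
        (Finset.sum_nonneg fun i _ => ha i))
    have hBpos : 0 < ∑ i, b i :=
      lt_of_lt_of_le (hab i0 hi0) (Finset.single_le_sum (fun i _ => hb i) (Finset.mem_univ i0))
    set A := ∑ i, a i with hAdef
    set B := ∑ i, b i with hBdef
    have key : ∀ i, a i - (A / B) * b i ≤ a i * Real.log (a i / b i) - a i * Real.log (A / B) := by
      intro i
      rcases eq_or_lt_of_le (ha i) with h0 | hpos
      · have hnb : 0 ≤ (A / B) * b i := mul_nonneg (div_nonneg hApos.le hBpos.le) (hb i)
        rw [← h0]
        simp only [zero_mul, sub_zero]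
        linarith
      · have hbi := hab i hpos
        have ht : 0 < (b i * A) / (a i * B) := by positivity
        have hlog := Real.log_le_sub_one_of_pos ht
        have hrw : Real.log (a i / b i) - Real.log (A / B) = - Real.log ((b i * A) / (a i * B)) := by
          rw [Real.log_div hpos.ne' hbi.ne', Real.log_div hApos.ne' hBpos.ne',
            Real.log_div (by positivity) (by positivity),
            Real.log_mul hbi.ne' hApos.ne', Real.log_mul hpos.ne' hBpos.ne']
          ring
        have h4 : a i * ((b i * A) / (a i * B)) = (A / B) * b i := by
          field_simp
        have h5 : a i * (Real.log (a i / b i) - Real.log (A / B))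
            ≥ a i * (1 - (b i * A) / (a i * B)) := by
          rw [hrw]
          apply mul_le_mul_of_nonneg_left _ hpos.le
          linarith
        nlinarith [h5, h4]
    have hsum := Finset.sum_le_sum (fun i (_ : i ∈ Finset.univ) => key i)
    rw [Finset.sum_sub_distrib, Finset.sum_sub_distrib, ← Finset.mul_sum, ← Finset.sum_mul,
      ← hAdef, ← hBdef] at hsum
    have hAB : A / B * B = A := div_mul_cancel₀ A hBpos.ne'
    linarith

lemma sum_ite_equiv {α β : Type*} [Fintype α] [DecidableEq β] (e : α ≃ β) (b : β)
    (f : α → ℝ) : (∑ a, if b = e a then f a else 0) = f (e.symm b) := by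
  rw [Fintype.sum_eq_single (e.symm b)]
  · simp
  · intro a ha
    rw [if_neg]
    intro hba
    exact ha (by rw [hba, Equiv.symm_apply_apply])

lemma mutualInfo_comp_equiv {α β γ : Type*} [Fintype α] [Fintype β] [Fintype γ]
    (e : γ ≃ β) (p : α × β → ℝ) :
    mutualInfo (fun q : α × γ => p (q.1, e q.2)) = mutualInfo p := by
  unfold mutualInfo
  refine Finset.sum_congr rfl fun a _ => ?_
  have hm : (∑ c', p (a, e c')) = ∑ b', p (a, b') :=
    Fintype.sum_equiv e _ _ (fun c => rfl)
  calc ∑ c, p (a, e c) * Real.log (p (a, e c) / ((∑ c', p (a, e c')) * ∑ a', p (a', e c)))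
      = ∑ c, p (a, e c) * Real.log (p (a, e c) / ((∑ b', p (a, b')) * ∑ a', p (a', e c))) := by
        rw [hm]
    _ = ∑ b, p (a, b) * Real.log (p (a, b) / ((∑ b', p (a, b')) * ∑ a', p (a', b))) :=
        Fintype.sum_equiv e _ _ (fun c => rfl)

lemma mutualInfo_nonneg {X Y : Type*} [Fintype X] [Fintype Y] (Q : X × Y → ℝ)
    (hQ : IsPMF Q) : 0 ≤ mutualInfo Q := by
  have hsupp : ∀ q : X × Y, 0 < Q q → 0 < (∑ y', Q (q.1, y')) * (∑ x', Q (x', q.2)) := by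
    intro q hq
    have h1 : 0 < ∑ y', Q (q.1, y') :=
      lt_of_lt_of_le hq (Finset.single_le_sum (fun y _ => hQ.1 (q.1, y)) (Finset.mem_univ q.2))
    have h2 : 0 < ∑ x', Q (x', q.2) :=
      lt_of_lt_of_le hq (Finset.single_le_sum (fun x _ => hQ.1 (x, q.2)) (Finset.mem_univ q.1))
    exact mul_pos h1 h2
  have h := log_sum_ineq (ι := X × Y) Q
    (fun q => (∑ y', Q (q.1, y')) * (∑ x', Q (x', q.2)))
    hQ.1
    (fun q => mul_nonneg (Finset.sum_nonneg fun y _ => hQ.1 _) (Finset.sum_nonneg fun x _ => hQ.1 _))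
    hsupp
  have hA : (∑ q : X × Y, Q q) = 1 := hQ.2
  have hB : (∑ q : X × Y, (∑ y', Q (q.1, y')) * (∑ x', Q (x', q.2))) = 1 := by
    rw [Fintype.sum_prod_type]
    have : ∀ x : X, (∑ y : Y, (∑ y', Q (x, y')) * (∑ x', Q (x', y)))
        = (∑ y', Q (x, y')) * (∑ y, ∑ x', Q (x', y)) := by
      intro x
      rw [Finset.mul_sum]
    simp only [this]
    rw [← Finset.sum_mul]
    have h1 : (∑ x, ∑ y', Q (x, y')) = 1 := by
      rw [← Fintype.sum_prod_type]; exact hQ.2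
    have h2 : (∑ y, ∑ x', Q (x', y)) = 1 := by
      rw [Finset.sum_comm, ← Fintype.sum_prod_type]; exact hQ.2
    rw [h1, h2, one_mul]
  rw [hA, hB] at h
  simp only [div_one, Real.log_one, mul_zero, one_mul] at h
  rw [Fintype.sum_prod_type] at h
  exact h

lemma dpi_lower {X U Y : Type*} [Fintype X] [Fintype U] [Fintype Y]
    (Q : X × Y → ℝ) (P : X × U × Y → ℝ)
    (hP0 : ∀ a, 0 ≤ P a)
    (hmarg : ∀ x y, (∑ u, P (x, u, y)) = Q (x, y))
    (hM : ∀ x u y, P (x, u, y) * (∑ x', ∑ y', P (x', u, y')) =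
      (∑ y', P (x, u, y')) * (∑ x', P (x', u, y))) :
    mutualInfo Q ≤ mutualInfo (fun q : X × U => ∑ y, P (q.1, q.2, y)) := by
  have hQ0 : ∀ x y, 0 ≤ Q (x, y) := by
    intro x y
    rw [← hmarg]
    exact Finset.sum_nonneg fun u _ => hP0 _
  -- the (X)-marginal of P equals the X-marginal of Q
  have hpX : ∀ x, (∑ u', ∑ y', P (x, u', y')) = ∑ y', Q (x, y') := by
    intro x
    rw [Finset.sum_comm]
    exact Finset.sum_congr rfl fun y _ => hmarg x y
  -- Step A : rewrite I(X;U)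
  have stepA : mutualInfo (fun q : X × U => ∑ y, P (q.1, q.2, y)) =
      ∑ x, ∑ u, ∑ y, P (x, u, y) *
        Real.log (P (x, u, y) / ((∑ u', ∑ y', P (x, u', y')) * (∑ x', P (x', u, y)))) := by
    unfold mutualInfo
    refine Finset.sum_congr rfl fun x _ => Finset.sum_congr rfl fun u _ => ?_
    rw [Finset.sum_mul]
    refine Finset.sum_congr rfl fun y _ => ?_
    rcases eq_or_lt_of_le (hP0 (x, u, y)) with h0 | hpos
    · rw [← h0, zero_mul, zero_mul]
    · congr 1
      have hpU : 0 < ∑ x', ∑ y', P (x', u, y') :=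
        lt_of_lt_of_le (lt_of_lt_of_le hpos
          (Finset.single_le_sum (fun y' _ => hP0 (x, u, y')) (Finset.mem_univ y)))
          (Finset.single_le_sum (fun x' (_ : x' ∈ Finset.univ) =>
            Finset.sum_nonneg fun y' _ => hP0 (x', u, y')) (Finset.mem_univ x))
      have hpXU : 0 < ∑ y', P (x, u, y') :=
        lt_of_lt_of_le hpos (Finset.single_le_sum (fun y' _ => hP0 (x, u, y')) (Finset.mem_univ y))
      have hpUY : 0 < ∑ x', P (x', u, y) :=
        lt_of_lt_of_le hpos (Finset.single_le_sum (fun x' _ => hP0 (x', u, y)) (Finset.mem_univ x))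
      have hpXpos : 0 < ∑ u', ∑ y', P (x, u', y') :=
        lt_of_lt_of_le hpXU (Finset.single_le_sum (fun u' (_ : u' ∈ Finset.univ) =>
          Finset.sum_nonneg fun y' _ => hP0 (x, u', y')) (Finset.mem_univ u))
      congr 1
      rw [div_eq_div_iff (by positivity) (by positivity)]
      linear_combination (-(∑ u', ∑ y', P (x, u', y'))) * hM x u y
  -- Step B : log-sum inequality in u, for each (x,y)
  have stepB : ∀ x y, Q (x, y) *
      Real.log (Q (x, y) / ((∑ u', ∑ y', P (x, u', y')) * (∑ x', Q (x', y)))) ≤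
      ∑ u, P (x, u, y) *
        Real.log (P (x, u, y) / ((∑ u', ∑ y', P (x, u', y')) * (∑ x', P (x', u, y)))) := by
    intro x y
    have h := log_sum_ineq (fun u => P (x, u, y))
      (fun u => (∑ u', ∑ y', P (x, u', y')) * (∑ x', P (x', u, y)))
      (fun u => hP0 _)
      (fun u => mul_nonneg (Finset.sum_nonneg fun u' _ => Finset.sum_nonneg fun y' _ => hP0 _)
        (Finset.sum_nonneg fun x' _ => hP0 _))
      (fun u hu => mul_pos
        (lt_of_lt_of_le (lt_of_lt_of_le hu
          (Finset.single_le_sum (fun y' _ => hP0 (x, u, y')) (Finset.mem_univ y)))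
          (Finset.single_le_sum (fun u' (_ : u' ∈ Finset.univ) =>
            Finset.sum_nonneg fun y' _ => hP0 (x, u', y')) (Finset.mem_univ u)))
        (lt_of_lt_of_le hu (Finset.single_le_sum (fun x' _ => hP0 (x', u, y))
          (Finset.mem_univ x))))
    rw [hmarg x y] at h
    have hb : (∑ u, (∑ u', ∑ y', P (x, u', y')) * (∑ x', P (x', u, y))) =
        (∑ u', ∑ y', P (x, u', y')) * (∑ x', Q (x', y)) := by
      rw [← Finset.mul_sum]
      congr 1
      rw [Finset.sum_comm]
      exact Finset.sum_congr rfl fun x' _ => hmarg x' y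
    rw [hb] at h
    exact h
  -- put it together
  have stepC : mutualInfo Q =
      ∑ x, ∑ y, Q (x, y) *
        Real.log (Q (x, y) / ((∑ u', ∑ y', P (x, u', y')) * (∑ x', Q (x', y)))) := by
    unfold mutualInfo
    refine Finset.sum_congr rfl fun x _ => Finset.sum_congr rfl fun y _ => ?_
    rw [hpX]
  rw [stepC, stepA]
  calc ∑ x, ∑ y, Q (x, y) *
        Real.log (Q (x, y) / ((∑ u', ∑ y', P (x, u', y')) * (∑ x', Q (x', y))))
      ≤ ∑ x, ∑ y, ∑ u, P (x, u, y) *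
        Real.log (P (x, u, y) / ((∑ u', ∑ y', P (x, u', y')) * (∑ x', P (x', u, y)))) :=
        Finset.sum_le_sum fun x _ => Finset.sum_le_sum fun y _ => stepB x y
    _ = ∑ x, ∑ u, ∑ y, P (x, u, y) *
        Real.log (P (x, u, y) / ((∑ u', ∑ y', P (x, u', y')) * (∑ x', P (x', u, y)))) :=
        Finset.sum_congr rfl fun x _ => Finset.sum_comm


/-- **Unlimited-common-randomness corner of the rate region equals the mutual information:**
`inf { R : ∃ R₀ ≥ 0, ∃ R_L ≥ 0, (R, R₀, R_L) ∈ ℛ(Q_{XY}) } = I(X;Y)`, where `I(X;Y)` is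
computed under `Q_{XY}`. -/
theorem unlimited_common_randomness_corner_eq_mutualInfo
    {X Y : Type*} [Fintype X] [Fintype Y]
    (Q : X × Y → ℝ) (hQ : IsPMF Q) :
    sInf {R : ℝ | ∃ R0 : ℝ, 0 ≤ R0 ∧ ∃ RL : ℝ, 0 ≤ RL ∧ (R, R0, RL) ∈ RateRegion Q} =
      mutualInfo Q := by
  classical
  set S := {R : ℝ | ∃ R0 : ℝ, 0 ≤ R0 ∧ ∃ RL : ℝ, 0 ≤ RL ∧ (R, R0, RL) ∈ RateRegion Q} with hS
  -- every element of S is at least I(X;Y)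
  have hlb : ∀ r ∈ S, mutualInfo Q ≤ r := by
    rintro r ⟨R0, hR0, RL, hRL, h1, h2, h3, m, P, hPMF, hmarg, hMk, hIXU, -, -⟩
    exact le_trans (dpi_lower Q P hPMF.1 hmarg hMk) hIXU
  -- construction : U = Y
  set e : Y ≃ Fin (Fintype.card Y) := Fintype.equivFin Y with he
  set Pc : X × Fin (Fintype.card Y) × Y → ℝ :=
    fun q => if q.2.1 = e q.2.2 then Q (q.1, q.2.2) else 0 with hPc
  have hPc0 : ∀ a, 0 ≤ Pc a := by
    intro a
    simp only [hPc]
    split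
    · exact hQ.1 _
    · exact le_refl 0
  have hsum_u : ∀ x y, (∑ u, Pc (x, u, y)) = Q (x, y) := by
    intro x y
    simp [hPc, Finset.sum_ite_eq']
  have hsum_y : ∀ x u, (∑ y, Pc (x, u, y)) = Q (x, e.symm u) := by
    intro x u
    exact sum_ite_equiv e u (fun y => Q (x, y))
  have hsum_x : ∀ u y, (∑ x, Pc (x, u, y)) = if u = e y then ∑ x, Q (x, y) else 0 := by
    intro u y
    by_cases h : u = e y <;> simp [hPc, h]
  have hpU : ∀ u, (∑ x, ∑ y, Pc (x, u, y)) = ∑ x, Q (x, e.symm u) :=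
    fun u => Finset.sum_congr rfl fun x _ => hsum_y x u
  have hPMFc : IsPMF Pc := by
    refine ⟨hPc0, ?_⟩
    rw [Fintype.sum_prod_type]
    have : ∀ x : X, (∑ q : Fin (Fintype.card Y) × Y, Pc (x, q)) = ∑ y, Q (x, y) := by
      intro x
      rw [Fintype.sum_prod_type, Finset.sum_comm]
      exact Finset.sum_congr rfl fun y _ => hsum_u x y
    simp only [this]
    rw [← Fintype.sum_prod_type]
    exact hQ.2
  have hMkc : IsMarkov Pc := by
    intro x u y
    have h1 : (∑ x', ∑ y', Pc (x', u, y')) = ∑ x', Q (x', e.symm u) :=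
      Finset.sum_congr rfl fun x' _ => hsum_y x' u
    rw [h1, hsum_y, hsum_x]
    by_cases h : u = e y
    · subst h
      simp only [if_pos rfl, hPc, Equiv.symm_apply_apply, if_true, eq_self_iff_true]
    · simp only [if_neg h, hPc]
      ring
  have hIXUc : IXU Pc = mutualInfo Q := by
    unfold IXU
    have h1 : (fun q : X × Fin (Fintype.card Y) => ∑ y, Pc (q.1, q.2, y)) =
        fun q : X × Fin (Fintype.card Y) => Q (q.1, e.symm q.2) :=
      funext fun q => hsum_y q.1 q.2
    rw [h1]
    exact mutualInfo_comp_equiv e.symm Q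
  have hHc : HYgU Pc = 0 := by
    unfold HYgU
    have h1 : (fun q : Fin (Fintype.card Y) × Y => ∑ x, Pc (x, q.1, q.2)) =
        fun q : Fin (Fintype.card Y) × Y => if q.1 = e q.2 then ∑ x, Q (x, q.2) else 0 :=
      funext fun q => hsum_x q.1 q.2
    have h2 : (fun u : Fin (Fintype.card Y) => ∑ x, ∑ y, Pc (x, u, y)) =
        fun u => (∑ x, Q (x, e.symm u)) := funext fun u => hpU u
    rw [h1, h2]
    unfold entropy
    rw [Fintype.sum_prod_type]
    have h3 : ∀ u : Fin (Fintype.card Y),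
        (∑ y, (if u = e y then ∑ x, Q (x, y) else 0) *
          Real.log (if u = e y then ∑ x, Q (x, y) else 0)) =
        (∑ x, Q (x, e.symm u)) * Real.log (∑ x, Q (x, e.symm u)) := by
      intro u
      have h4 : ∀ y, (if u = e y then ∑ x, Q (x, y) else 0) *
          Real.log (if u = e y then ∑ x, Q (x, y) else 0) =
          if u = e y then (∑ x, Q (x, y)) * Real.log (∑ x, Q (x, y)) else 0 := by
        intro y
        split <;> simp
      simp only [h4]
      exact sum_ite_equiv e u (fun y => (∑ x, Q (x, y)) * Real.log (∑ x, Q (x, y)))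
    simp only [h3]
    ring
  have hI0 : 0 ≤ mutualInfo Q := mutualInfo_nonneg Q hQ
  have hmem : mutualInfo Q ∈ S := by
    refine ⟨max (IXYU Pc) 0, le_max_right _ _, 0, le_refl 0,
      hI0, le_max_right _ _, le_refl 0, Fintype.card Y, Pc, hPMFc, hsum_u, hMkc, ?_, ?_, ?_⟩
    · exact le_of_eq hIXUc
    · have := le_max_left (IXYU Pc) 0
      linarith
    · exact le_of_eq hHc
  exact le_antisymm (csInf_le ⟨mutualInfo Q, hlb⟩ hmem) (le_csInf ⟨_, hmem⟩ hlb)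
end
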